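/- Let Z be a non-empty zone, α a bound function, and x a clock different from x₀. Among the regions R with respect to α that intersect Z, the least value of R_{0x} is (<,∞) if Z_{x0} < (≤,−α_x), and ⌈−Z_{x0}⌉ otherwise. -/

import Mathlib

attribute [local instance] Classical.propDecidable

noncomputable section

namespace TAform

/-! ### Weights `(≼, c)` with `c ∈ ℤ ∪ {∞}` -/

/-- Values in `ℤ ∪ {∞}`: `none` represents `∞`. -/
abbrev OVal := Option ℤ

/-- Addition on `ℤ ∪ {∞}`. -/
def ovAdd : OVal → OVal → OVal
  | some a, some b => some (a + b)
  | _, _ => none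

/-- Strict order on `ℤ ∪ {∞}`. -/
def ovLt : OVal → OVal → Prop
  | some a, some b => a < b
  | some _, none => True
  | none, _ => False

/-- A weight `(≼, c)`: `strict = true` means `≼` is `<`, `strict = false` means `≤`;
`val ∈ ℤ ∪ {∞}`. -/
structure Weight where
  strict : Bool
  val : OVal

/-- The weight `(<, ∞)`. -/
def winf : Weight := ⟨true, none⟩

/-- The weight `(≤, c)`. -/
def wle (c : ℤ) : Weight := ⟨false, some c⟩

/-- The weight `(<, c)`. -/
def wlt (c : ℤ) : Weight := ⟨true, some c⟩

/-- Addition: `(≼₁,c₁)+(≼₂,c₂) = (≼,c₁+c₂)` where `≼` is `<` iff `≼₁` or `≼₂` is `<`. -/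
def Weight.add (a b : Weight) : Weight := ⟨a.strict || b.strict, ovAdd a.val b.val⟩

/-- Order: `(≼₁,c₁) < (≼₂,c₂)` iff `c₁ < c₂`, or `c₁ = c₂`, `≼₁` is `<` and `≼₂` is `≤`. -/
def Weight.lt (a b : Weight) : Prop :=
  ovLt a.val b.val ∨ (a.val = b.val ∧ a.strict = true ∧ b.strict = false)

def Weight.le (a b : Weight) : Prop := Weight.lt a b ∨ a = b

/-- Minus: `−(≼,c) = (≼,−c)`. -/
def Weight.neg (w : Weight) : Weight := ⟨w.strict, Option.map (fun c => -c) w.val⟩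

/-- Floor: `⌊(<,c)⌋ = (≤,c−1)` and `⌊(≤,c)⌋ = (≤,c)`. -/
def Weight.floor (w : Weight) : Weight :=
  ⟨false, if w.strict then Option.map (fun c => c - 1) w.val else w.val⟩

/-- Ceiling (on integer-valued weights): `⌈(≤,c)⌉ = (≤,c)` and `⌈(<,c)⌉ = (<,c+1)`. -/
def Weight.ceil (w : Weight) : Weight :=
  if w.strict then ⟨true, Option.map (fun c => c + 1) w.val⟩ else w

/-- Maximum of two weights. -/
def Weight.max (a b : Weight) : Weight := if Weight.lt a b then b else a

/-- Satisfaction: `d ≼ c` for a real number `d` and a weight `(≼,c)`. -/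
def Weight.sat (w : Weight) (d : ℝ) : Prop :=
  match w.val with
  | none => True
  | some c => if w.strict then d < (c : ℝ) else d ≤ (c : ℝ)

/-! ### Distance graphs and their semantics -/

/-- Vertices: clocks of `X` together with the special vertex `x₀` (represented by `none`). -/
abbrev Vtx (X : Type*) := Option X

/-- A distance graph: a weight for every ordered pair of vertices.  The edge
`a →^{≼ c} b` represents the constraint `v b − v a ≼ c`. -/
abbrev DGraph (X : Type*) := Vtx X → Vtx X → Weight

/-- A clock valuation. -/
abbrev Val (X : Type*) := X → ℝ

/-- The valuation is nonnegative (clock valuations map into `ℝ≥0`). -/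
def Nonneg {X : Type*} (v : Val X) : Prop := ∀ x, 0 ≤ v x

/-- Extension of a valuation to all vertices, sending `x₀` to `0`. -/
def extV {X : Type*} (v : Val X) : Vtx X → ℝ
  | none => 0
  | some x => v x

/-- Semantics of a distance graph: the set of nonnegative clock valuations
(with `x₀ = 0`) satisfying all edge constraints. -/
def sem {X : Type*} (G : DGraph X) : Set (Val X) :=
  { v | Nonneg v ∧ ∀ a b, (G a b).sat (extV v b - extV v a) }

/-- Weight of the path `a :: l ++ [b]` in `G` (sum of the weights of its edges). -/
def pathWeight {X : Type*} (G : DGraph X) : Vtx X → List (Vtx X) → Vtx X → Weight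
  | a, [], b => G a b
  | a, c :: l, b => (G a c).add (pathWeight G c l b)

/-- `G` has only positive cycles: no cycle has weight at most `(<,0)`. -/
def OnlyPositiveCycles {X : Type*} (G : DGraph X) : Prop :=
  ∀ (a : Vtx X) (l : List (Vtx X)), ¬ (pathWeight G a l a).le (wlt 0)

/-- Canonical form: the weight of the edge from `a` to `b` is a lower bound of the
weights of all paths from `a` to `b`. -/
def PathCanonical {X : Type*} (G : DGraph X) : Prop :=
  ∀ (a b : Vtx X) (l : List (Vtx X)), (G a b).le (pathWeight G a l b)

/-- The weight `w` bounds the difference `v b − v a` over all `v ∈ S`. -/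
def Bounds {X : Type*} (S : Set (Val X)) (a b : Vtx X) (w : Weight) : Prop :=
  ∀ v ∈ S, w.sat (extV v b - extV v a)

/-- `G` is the canonical distance graph of the set `S`: it represents `S` and each of
its edge weights is the least weight bounding the corresponding difference over `S`
(equivalently, for sets defined by clock constraints, the lower bound of the weights
of paths between its endpoints). -/
def IsCanonGraph {X : Type*} (G : DGraph X) (S : Set (Val X)) : Prop :=
  sem G = S ∧ ∀ a b w, Bounds S a b w → (G a b).le w

/-- A zone: a set of valuations defined by a conjunction of constraints of the form
`x − y # c` or `x # c`, i.e. the set represented by some distance graph. -/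
def IsZone {X : Type*} (Z : Set (Val X)) : Prop := ∃ G : DGraph X, sem G = Z

/-! ### Regions and closure -/

/-- Region equivalence with respect to the bound function `α`: same integer parts
(or both above the bound), same set of clocks with zero fractional part, and the
same ordering of fractional parts of bounded clocks. -/
def regEq {X : Type*} (α : X → ℕ) (v w : Val X) : Prop :=
  (∀ x, ((α x : ℝ) < v x ∧ (α x : ℝ) < w x) ∨
    (⌊v x⌋ = ⌊w x⌋ ∧ (Int.fract (v x) = 0 ↔ Int.fract (w x) = 0))) ∧
  (∀ x y, v x ≤ (α x : ℝ) → v y ≤ (α y : ℝ) →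
    (Int.fract (v x) ≤ Int.fract (v y) ↔ Int.fract (w x) ≤ Int.fract (w y)))

/-- A region with respect to `α`: an equivalence class of region equivalence
(inside the nonnegative valuations). -/
def IsRegion {X : Type*} (α : X → ℕ) (R : Set (Val X)) : Prop :=
  ∃ v : Val X, Nonneg v ∧ R = { w | Nonneg w ∧ regEq α v w }

/-- Closure abstraction: the union of the regions (w.r.t. `α`) intersecting `S`. -/
def Closure {X : Type*} (α : X → ℕ) (S : Set (Val X)) : Set (Val X) :=
  ⋃₀ { R | IsRegion α R ∧ (R ∩ S).Nonempty }

/-! ### LU-bounds and the `Extra⁺_LU` extrapolation -/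

/-- `w > (≤, l)` where `l ∈ ℕ ∪ {−∞}` (`⊥` is `−∞`). -/
def gtLB (w : Weight) (l : WithBot ℕ) : Prop :=
  ∀ n : ℕ, l = (n : WithBot ℕ) → ovLt (some (n : ℤ)) w.val

/-- `−w > (≤, l)` where `l ∈ ℕ ∪ {−∞}`. -/
def negGtLB (w : Weight) (l : WithBot ℕ) : Prop :=
  ∃ c : ℤ, w.val = some c ∧ ∀ n : ℕ, l = (n : WithBot ℕ) → c < -(n : ℤ)

/-- The weight `(<, −u)` for `u ∈ ℕ ∪ {−∞}` (with `(<,∞)` when `u = −∞`). -/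
def wltNeg (u : WithBot ℕ) : Weight :=
  ⟨true, WithBot.recBotCoe none (fun n => some (-(n : ℤ))) u⟩

/-- The `Extra⁺_{LU}` extrapolation, applied edgewise to a distance graph `G`
(the canonical graph of a zone): `Z⁺_{xy} = (<,∞)` if `Z_{xy} > (≤,L_y)`, or
`−Z_{y0} > (≤,L_y)`, or `−Z_{x0} > (≤,U_x)` and `y ≠ x₀`;
`Z⁺_{x0} = (<,−U_x)` if `−Z_{x0} > (≤,U_x)`; and `Z⁺_{xy} = Z_{xy}` otherwise. -/
def extraLU {X : Type*} (L U : X → WithBot ℕ) (G : DGraph X) : DGraph X := fun a b =>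
  match a, b with
  | some x, some y =>
      if gtLB (G (some x) (some y)) (L y) ∨ negGtLB (G (some y) none) (L y) ∨
          negGtLB (G (some x) none) (U x)
      then winf else G (some x) (some y)
  | none, some y =>
      if gtLB (G none (some y)) (L y) ∨ negGtLB (G (some y) none) (L y)
      then winf else G none (some y)
  | some x, none =>
      if negGtLB (G (some x) none) (U x) then wltNeg (U x) else G (some x) none
  | none, none => G none none

/-! ### LU-preorder and its abstraction -/

/-- `l < r` where `l ∈ ℕ ∪ {−∞}` and `r : ℝ`. -/
def lbLtR (l : WithBot ℕ) (r : ℝ) : Prop := ∀ n : ℕ, l = (n : WithBot ℕ) → (n : ℝ) < r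

/-- The LU-preorder `ν' ≼_{LU} ν`: for each clock `x`, either `ν' x = ν x`,
or `L x < ν' x < ν x`, or `U x < ν x < ν' x`. -/
def LUpre {X : Type*} (L U : X → WithBot ℕ) (ν' ν : Val X) : Prop :=
  ∀ x, ν' x = ν x ∨ (lbLtR (L x) (ν' x) ∧ ν' x < ν x) ∨ (lbLtR (U x) (ν x) ∧ ν x < ν' x)

/-- The abstraction `a_{≼LU}(W) = { ν | ∃ ν' ∈ W, ν' ≼_{LU} ν }` (inside the
nonnegative valuations). -/
def aLU {X : Type*} (L U : X → WithBot ℕ) (W : Set (Val X)) : Set (Val X) :=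
  { ν | Nonneg ν ∧ ∃ ν' ∈ W, LUpre L U ν' ν }

/-! ### Guards, transitions, timed automata -/

/-- Comparison operators `# ∈ {<, ≤, =, ≥, >}`. -/
inductive Cmp | lt | le | eq | ge | gt
deriving DecidableEq

/-- Satisfaction of a comparison by real numbers. -/
def Cmp.sat : Cmp → ℝ → ℝ → Prop
  | .lt, a, b => a < b
  | .le, a, b => a ≤ b
  | .eq, a, b => a = b
  | .ge, a, b => a ≥ b
  | .gt, a, b => a > b

/-- A clock constraint (guard): a conjunction (list) of constraints `x # c`, `c ∈ ℕ`. -/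
abbrev Guard (X : Type*) := List (X × Cmp × ℕ)

/-- `v ⊨ g`: every conjunct of the guard holds. -/
def gsat {X : Type*} (v : Val X) (g : Guard X) : Prop :=
  ∀ p ∈ g, Cmp.sat p.2.1 (v p.1) (p.2.2 : ℝ)

/-- `[R]v`: reset the clocks in `R` to `0`, leaving the others unchanged. -/
def resetVal {X : Type*} (R : Set X) (v : Val X) : Val X := Set.indicator Rᶜ v

/-- One step `ν →^{δ,t} ν'` for a transition with guard `g` and reset set `R`:
`ν + δ ⊨ g` and `ν' = [R](ν + δ)`. -/
def step {X : Type*} (g : Guard X) (R : Set X) (δ : ℝ) (ν ν' : Val X) : Prop :=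
  0 ≤ δ ∧ gsat (fun x => ν x + δ) g ∧ ν' = resetVal R (fun x => ν x + δ)

/-- `Post(S,t)`: all valuations reachable by the transition from valuations in `S`. -/
def Post {X : Type*} (g : Guard X) (R : Set X) (S : Set (Val X)) : Set (Val X) :=
  { ν' | ∃ ν ∈ S, ∃ δ : ℝ, step g R δ ν ν' }

/-- A timed automaton `(Q, q₀, X, T, Acc)`. -/
structure TimedAuto (Q X : Type*) where
  init : Q
  trans : Set (Q × Guard X × Set X × Q)
  acc : Set Q

/-- `(q,ν) →^{δ,t} (q',ν')` for a transition `t = (q,g,R,q')` of the automaton. -/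
def TimedAuto.cstep {Q X : Type*} (A : TimedAuto Q X) (t : Q × Guard X × Set X × Q)
    (δ : ℝ) (c c' : Q × Val X) : Prop :=
  t ∈ A.trans ∧ c.1 = t.1 ∧ c'.1 = t.2.2.2 ∧ step t.2.1 t.2.2.1 δ c.2 c'.2

/-- `m` is the least value of the edge `a → b` of the canonical distance graph of a
region (w.r.t. `α`), taken over the regions intersecting `Z`: it is attained and is a
lower bound. -/
def IsLeastEdgeVal {X : Type*} (α : X → ℕ) (Z : Set (Val X)) (a b : Vtx X)
    (m : Weight) : Prop :=
  (∃ (R : Set (Val X)) (GR : DGraph X), IsRegion α R ∧ (R ∩ Z).Nonempty ∧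
      IsCanonGraph GR R ∧ GR a b = m) ∧
  ∀ (R : Set (Val X)) (GR : DGraph X), IsRegion α R → (R ∩ Z).Nonempty →
      IsCanonGraph GR R → m.le (GR a b)

/-!
Write `⌈d⌉` for the least weight satisfied by a real `d`. On the region of a valuation `v`
the least bound of a clock `x` is `⌈v x⌉` if `v x ≤ α x`, and `(<,∞)` otherwise, since
raising `x` above `α x` does not leave the region; and every region has a canonical graph,
because a region is cut out by its least bounds.

If `Z_{x0} < (≤,−α_x)`, every valuation of `Z` exceeds `α x` in `x`, so every region meeting
`Z` has `R_{0x} = (<,∞)`. Otherwise `Z_{x0} = ⌈−v x⌉` for some `v ∈ Z` with `v x ≤ α x`, and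
the region of `v` has `R_{0x} = ⌈v x⌉ = ⌈−Z_{x0}⌉`; conversely `−v' x ≼ Z_{x0}` for every
`v' ∈ Z`, which forces `⌈−Z_{x0}⌉ ≤ R_{0x}` on every region meeting `Z`.
-/

namespace Weight

@[simp] lemma sat_wle {c : ℤ} {d : ℝ} : (wle c).sat d ↔ d ≤ c := by simp [sat, wle]

@[simp] lemma sat_wlt {c : ℤ} {d : ℝ} : (wlt c).sat d ↔ d < c := by simp [sat, wlt]

lemma le_refl (a : Weight) : a.le a := Or.inr rfl

lemma le_antisymm {a b : Weight} (hab : a.le b) (hba : b.le a) : a = b := by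
  rcases a with ⟨_ | _, _ | a⟩ <;> rcases b with ⟨_ | _, _ | b⟩ <;>
    simp_all [Weight.le, Weight.lt, ovLt] <;> omega

lemma sat_of_le {a b : Weight} {d : ℝ} (hab : a.le b) (ha : a.sat d) : b.sat d := by
  rcases a with ⟨_ | _, _ | a⟩ <;> rcases b with ⟨_ | _, _ | b⟩ <;>
    simp_all [Weight.le, Weight.lt, ovLt, sat, ← le_iff_lt_or_eq] <;> rify at hab <;> linarith

lemma lt_wle_iff_le_wlt {a : Weight} {c : ℤ} : a.lt (wle c) ↔ a.le (wlt c) := by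
  rcases a with ⟨_ | _, _ | a⟩ <;> simp [Weight.le, Weight.lt, ovLt, wle, wlt]

lemma wle_le_of_sat {w : Weight} {c : ℤ} {d : ℝ} (hw : w.sat d) (hd : c ≤ d) :
    (wle c).le w := by
  rcases w with ⟨_ | _, _ | b⟩ <;>
    simp_all [Weight.le, Weight.lt, ovLt, sat, wle, ← le_iff_lt_or_eq] <;> rify <;> linarith

lemma wlt_le_of_sat {w : Weight} {c : ℤ} {d : ℝ} (hw : w.sat d) (hd : c - 1 < d) :
    (wlt c).le w := by
  rcases w with ⟨_ | _, _ | b⟩ <;>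
    simp_all [Weight.le, Weight.lt, ovLt, sat, wlt, ← le_iff_lt_or_eq]
  all_goals
    have : c < b + 1 := by rify; linarith
    omega

lemma neg_ceil_le_of_sat {w w' : Weight} {d : ℝ} (hw : w.val ≠ none) (h : w.sat (-d))
    (h' : w'.sat d) : w.neg.ceil.le w' := by
  rcases w with ⟨_ | _, _ | c⟩ <;> simp only [ne_eq, not_true_eq_false] at hw <;>
    simp only [sat, ite_true, Bool.false_eq_true, ite_false] at h
  · exact wle_le_of_sat h' (by push_cast; linarith)
  · exact wlt_le_of_sat h' (by push_cast; linarith)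

lemma winf_le {w : Weight} (h : w.val = none) : winf.le w := by
  rcases w with ⟨_ | _, _ | b⟩ <;> simp_all [Weight.le, Weight.lt, ovLt, winf]

end Weight

/-- The paper's `⌈(≤, d)⌉` for a real `d`: the least weight satisfied by `d`. -/
def ceilReal (d : ℝ) : Weight := if Int.fract d = 0 then wle ⌊d⌋ else wlt (⌊d⌋ + 1)

lemma ceilReal_intCast (n : ℤ) : ceilReal n = wle n := by simp [ceilReal]

lemma ceilReal_eq_wlt {c : ℤ} {d : ℝ} (h₁ : c - 1 < d) (h₂ : d < c) : ceilReal d = wlt c := by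
  have hfloor : ⌊d⌋ = c - 1 := Int.floor_eq_iff.2 ⟨by push_cast; linarith, by push_cast; linarith⟩
  have hfract : Int.fract d ≠ 0 := by
    rw [Int.fract, hfloor]; push_cast; linarith
  simp [ceilReal, hfract, hfloor]

lemma val_ceilReal_ne_none (d : ℝ) : (ceilReal d).val ≠ none := by
  unfold ceilReal; split_ifs <;> simp [wle, wlt]

lemma sat_ceilReal (d : ℝ) : (ceilReal d).sat d := by
  have := Int.lt_floor_add_one d
  unfold ceilReal; split_ifs with h
  · rw [Int.fract, sub_eq_zero] at h
    exact Weight.sat_wle.2 h.le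
  · exact Weight.sat_wlt.2 (by push_cast; exact this)

lemma ceilReal_le_iff {d : ℝ} {w : Weight} : (ceilReal d).le w ↔ w.sat d := by
  refine ⟨fun h => Weight.sat_of_le h (sat_ceilReal d), fun hw => ?_⟩
  unfold ceilReal; split_ifs with h
  · exact Weight.wle_le_of_sat hw (Int.floor_le d)
  · refine Weight.wlt_le_of_sat hw ?_
    have := Int.floor_lt_self_iff.2 (Int.fract_ne_zero_iff.1 h)
    push_cast; linarith

lemma ceilReal_eq_iff {a b : ℝ} :
    ceilReal a = ceilReal b ↔ ⌊a⌋ = ⌊b⌋ ∧ (Int.fract a = 0 ↔ Int.fract b = 0) := by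
  refine ⟨fun h => ?_, fun ⟨h₁, h₂⟩ => by simp only [ceilReal, h₁, h₂]⟩
  unfold ceilReal at h; split_ifs at h <;> simp_all [wle, wlt]

lemma lt_iff_of_ceilReal_eq {a b : ℝ} (h : ceilReal a = ceilReal b) (n : ℤ) :
    (n : ℝ) < a ↔ n < b := by
  simp only [← not_le, ← Weight.sat_wle, ← ceilReal_le_iff, h]

lemma neg_ceil_ceilReal_neg (d : ℝ) : (ceilReal (-d)).neg.ceil = ceilReal d := by
  by_cases h : Int.fract d = 0
  · rw [Int.fract, sub_eq_zero] at h
    rw [h, ← Int.cast_neg, ceilReal_intCast, ceilReal_intCast]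
    simp [wle, Weight.neg, Weight.ceil]
  · have := Int.floor_lt_self_iff.2 (Int.fract_ne_zero_iff.1 h)
    have := Int.lt_floor_add_one d
    rw [ceilReal_eq_wlt (c := -⌊d⌋) (by push_cast; linarith) (by push_cast; linarith),
      ceilReal_eq_wlt (c := ⌊d⌋ + 1) (by push_cast; linarith) (by push_cast; linarith)]
    simp [wlt, Weight.neg, Weight.ceil]

section LeastBound

variable {X : Type*} {S : Set (Val X)} {a b : Vtx X} {w : Weight}

@[simp] lemma extV_none (v : Val X) : extV v none = 0 := rfl

@[simp] lemma extV_some (v : Val X) (x : X) : extV v (some x) = v x := rfl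

lemma Bounds.mono (h : Bounds S a b w) {w' : Weight} (hw : w.le w') : Bounds S a b w' :=
  fun v hv => Weight.sat_of_le hw (h v hv)

def IsLeastBound (S : Set (Val X)) (a b : Vtx X) (w : Weight) : Prop :=
  Bounds S a b w ∧ ∀ w', Bounds S a b w' → w.le w'

lemma IsLeastBound.unique {w' : Weight} (h : IsLeastBound S a b w) (h' : IsLeastBound S a b w') :
    w = w' :=
  Weight.le_antisymm (h.2 w' h'.1) (h'.2 w h.1)

lemma IsCanonGraph.isLeastBound {G : DGraph X} (hG : IsCanonGraph G S) (a b : Vtx X) :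
    IsLeastBound S a b (G a b) :=
  ⟨fun v hv => (hG.1 ▸ hv : v ∈ sem G).2 a b, hG.2 a b⟩

lemma exists_isLeastBound (hS : S.Nonempty) (a b : Vtx X) : ∃ w, IsLeastBound S a b w := by
  by_cases hfin : ∃ c : ℤ, Bounds S a b (wle c)
  · obtain ⟨v, hv⟩ := hS
    obtain ⟨c, hc, hmin⟩ := Int.exists_least_of_bdd (P := fun c => Bounds S a b (wle c))
      ⟨⌈extV v b - extV v a⌉, fun c hc => Int.ceil_le.2 (by simpa using hc v hv)⟩ hfin
    have hmin' : ∀ s c', Bounds S a b ⟨s, some c'⟩ → c ≤ c' := fun s c' h =>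
      hmin c' (h.mono (by cases s <;> simp [Weight.le, Weight.lt, wle]))
    by_cases hlt : Bounds S a b (wlt c)
    · refine ⟨wlt c, hlt, fun ⟨s, c'⟩ hw' => ?_⟩
      rcases c' with _ | c'
      · simp [Weight.le, Weight.lt, ovLt, wlt]
      · have := hmin' s c' hw'
        cases s <;> simp [Weight.le, Weight.lt, ovLt, wlt] <;> omega
    · refine ⟨wle c, hc, fun ⟨s, c'⟩ hw' => ?_⟩
      rcases c' with _ | c'
      · simp [Weight.le, Weight.lt, ovLt, wle]
      · rcases (hmin' s c' hw').lt_or_eq with h | rfl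
        · simp [Weight.le, Weight.lt, ovLt, wle, h]
        · cases s
          · exact Weight.le_refl _
          · exact absurd hw' hlt
  · refine ⟨winf, fun _ _ => trivial, fun ⟨s, c⟩ hw' => Weight.winf_le ?_⟩
    rcases c with _ | c
    · rfl
    · exact absurd ⟨c, hw'.mono (by cases s <;> simp [Weight.le, Weight.lt, wle])⟩ hfin

lemma IsLeastBound.exists_ceilReal_eq (h : IsLeastBound S a b w) {c : ℤ}
    (hc : Bounds S a b (wle c)) : ∃ v ∈ S, ceilReal (extV v b - extV v a) = w := by
  rcases w with ⟨_ | _, _ | c'⟩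
  · simpa [Weight.le, Weight.lt, ovLt, wle] using h.2 _ hc
  · have : ¬ Bounds S a b (wlt c') := fun h' => by
      simpa [Weight.le, Weight.lt, ovLt, wlt] using h.2 _ h'
    obtain ⟨v, hv, hlt⟩ : ∃ v ∈ S, ¬ extV v b - extV v a < c' := by
      simpa only [Bounds, Weight.sat_wlt, not_forall, exists_prop] using this
    refine ⟨v, hv, ?_⟩
    have hle := h.1 v hv
    simp only [Weight.sat, ite_false, Bool.false_eq_true] at hle
    rw [show extV v b - extV v a = (c' : ℝ) by linarith, ceilReal_intCast, wle]
  · simpa [Weight.le, Weight.lt, ovLt, wle] using h.2 _ hc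
  · have : ¬ Bounds S a b (wle (c' - 1)) := fun h' => by
      have := h.2 _ h'
      simp [Weight.le, Weight.lt, ovLt, wle] at this
      omega
    obtain ⟨v, hv, hlt⟩ : ∃ v ∈ S, ¬ extV v b - extV v a ≤ ↑(c' - 1) := by
      simpa only [Bounds, Weight.sat_wle, not_forall, exists_prop] using this
    refine ⟨v, hv, ?_⟩
    have hle := h.1 v hv
    simp only [Weight.sat, ite_true] at hle
    rw [ceilReal_eq_wlt (by push_cast at hlt; linarith) hle, wlt]

end LeastBound

section Region

variable {X : Type*} {α : X → ℕ} {v w : Val X}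

def region (α : X → ℕ) (v : Val X) : Set (Val X) := { w | Nonneg w ∧ regEq α v w }

lemma mem_region_self (hv : Nonneg v) : v ∈ region α v :=
  ⟨hv, fun _ => Or.inr ⟨rfl, Iff.rfl⟩, fun _ _ _ _ => Iff.rfl⟩

lemma regEq.ceilReal_eq (h : regEq α v w) {z : X} (hz : v z ≤ α z) :
    ceilReal (w z) = ceilReal (v z) := by
  rcases h.1 z with ⟨hlt, -⟩ | hcell
  · exact absurd hz (not_le.2 hlt)
  · exact (ceilReal_eq_iff.2 hcell).symm

lemma regEq.lt_iff (h : regEq α v w) (z : X) : (α z : ℝ) < v z ↔ α z < w z := by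
  rcases h.1 z with ⟨h₁, h₂⟩ | hcell
  · exact iff_of_true h₁ h₂
  · exact_mod_cast lt_iff_of_ceilReal_eq (ceilReal_eq_iff.2 hcell) (α z)

lemma regEq.fract_le_iff (h : regEq α v w) {a b : X} (ha : v a ≤ α a) (hb : v b ≤ α b) :
    v a - ⌊v a⌋ ≤ v b - ⌊v b⌋ ↔ w a - ⌊v a⌋ ≤ w b - ⌊v b⌋ := by
  have := h.2 a b ha hb
  simp only [Int.fract, (ceilReal_eq_iff.1 (h.ceilReal_eq ha)).1,
    (ceilReal_eq_iff.1 (h.ceilReal_eq hb)).1] at this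
  exact this

lemma bounds_region_ceilReal {z : X} (hz : v z ≤ α z) :
    Bounds (region α v) none (some z) (ceilReal (v z)) := fun w hw => by
  simpa [← hw.2.ceilReal_eq hz] using sat_ceilReal (w z)

lemma bounds_region_ceilReal_neg {z : X} (hz : v z ≤ α z) :
    Bounds (region α v) (some z) none (ceilReal (-v z)) := fun w hw => by
  have := sat_ceilReal (-w z)
  rw [← neg_ceil_ceilReal_neg (-w z), neg_neg, hw.2.ceilReal_eq hz, ← neg_neg (v z),
    neg_ceil_ceilReal_neg] at this
  simpa using this

lemma bounds_region_wlt {z : X} (hz : α z < v z) :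
    Bounds (region α v) (some z) none (wlt (-α z)) := fun w hw => by
  have := (hw.2.lt_iff z).1 hz
  simp only [extV, Weight.sat_wlt]
  push_cast
  linarith

lemma bounds_region_pair_le {a b : X} (ha : v a ≤ α a) (hb : v b ≤ α b)
    (hab : v a - ⌊v a⌋ ≤ v b - ⌊v b⌋) :
    Bounds (region α v) (some b) (some a) (wle (⌊v a⌋ - ⌊v b⌋)) := fun w hw => by
  have := (hw.2.fract_le_iff ha hb).1 hab
  simp only [extV, Weight.sat_wle]
  push_cast
  linarith

lemma bounds_region_pair_lt {a b : X} (ha : v a ≤ α a) (hb : v b ≤ α b)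
    (hab : ¬ v a - ⌊v a⌋ ≤ v b - ⌊v b⌋) :
    Bounds (region α v) (some a) (some b) (wlt (⌊v b⌋ - ⌊v a⌋)) := fun w hw => by
  have := not_le.1 ((hw.2.fract_le_iff ha hb).not.1 hab)
  simp only [extV, Weight.sat_wlt]
  push_cast
  linarith

lemma mem_region_of_forall_sat (hw : Nonneg w)
    (hsat : ∀ a b b', Bounds (region α v) a b b' → b'.sat (extV w b - extV w a)) :
    w ∈ region α v := by
  have hcell : ∀ z, v z ≤ α z → ceilReal (w z) = ceilReal (v z) := fun z hz =>
    Weight.le_antisymm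
      (ceilReal_le_iff.2 (by simpa using hsat _ _ _ (bounds_region_ceilReal hz)))
      (neg_ceil_ceilReal_neg (v z) ▸ Weight.neg_ceil_le_of_sat (val_ceilReal_ne_none _)
        (by simpa using hsat _ _ _ (bounds_region_ceilReal_neg hz)) (sat_ceilReal (w z)))
  have hfloor : ∀ z, v z ≤ α z → ⌊w z⌋ = ⌊v z⌋ := fun z hz => (ceilReal_eq_iff.1 (hcell z hz)).1
  refine ⟨hw, fun z => ?_, fun a b ha hb => ?_⟩
  · by_cases hz : v z ≤ α z
    · exact Or.inr (ceilReal_eq_iff.1 (hcell z hz).symm)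
    · replace hz := not_le.1 hz
      have := hsat _ _ _ (bounds_region_wlt hz)
      simp only [extV, Weight.sat_wlt] at this
      push_cast at this
      exact Or.inl ⟨hz, by linarith⟩
  · simp only [Int.fract, hfloor a ha, hfloor b hb]
    constructor
    · intro hab
      have := hsat _ _ _ (bounds_region_pair_le ha hb hab)
      simp only [extV, Weight.sat_wle] at this
      push_cast at this
      linarith
    · intro hab
      by_contra hn
      have := hsat _ _ _ (bounds_region_pair_lt ha hb hn)
      simp only [extV, Weight.sat_wlt] at this
      push_cast at this
      linarith

lemma exists_isCanonGraph_region (α : X → ℕ) (hv : Nonneg v) :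
    ∃ G, IsCanonGraph G (region α v) := by
  choose G hG using exists_isLeastBound (S := region α v) ⟨v, mem_region_self hv⟩
  refine ⟨G, Set.ext fun w => ⟨fun hw => ?_, fun hw => ⟨hw.1, fun a b => (hG a b).1 w hw⟩⟩,
    fun a b => (hG a b).2⟩
  exact mem_region_of_forall_sat hw.1 fun a b b' hb' =>
    Weight.sat_of_le ((hG a b).2 b' hb') (hw.2 a b)

lemma update_mem_region (hw : w ∈ region α v) {x : X} (hx : α x < w x) {M : ℝ}
    (hM : w x ≤ M) : Function.update w x M ∈ region α v := by
  have hvx := (hw.2.lt_iff x).2 hx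
  refine ⟨fun z => ?_, fun z => ?_, fun a b ha hb => ?_⟩
  · rcases eq_or_ne z x with rfl | hz
    · simpa using (hw.1 z).trans hM
    · simpa [hz] using hw.1 z
  · rcases eq_or_ne z x with rfl | hz
    · exact Or.inl ⟨hvx, by simpa using hx.trans_le hM⟩
    · simpa [hz] using hw.2.1 z
  · have hax : a ≠ x := by rintro rfl; linarith
    have hbx : b ≠ x := by rintro rfl; linarith
    simpa [hax, hbx] using hw.2.2 a b ha hb

lemma Bounds.val_eq_none_of_mem_region {u : Weight} {x : X}
    (hu : Bounds (region α v) none (some x) u) (hw : w ∈ region α v) (hx : α x < w x) :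
    u.val = none := by
  rcases u with ⟨s, _ | c⟩
  · rfl
  · have hsat := hu _ (update_mem_region hw hx (le_max_left (w x) (c + 1)))
    have := le_max_right (w x) (c + 1)
    cases s <;> simp [Weight.sat, extV] at hsat <;> linarith

/-- The weight `R_{0x}` of the region `R` of `v`. -/
def regionUpper (α : X → ℕ) (v : Val X) (x : X) : Weight :=
  if (α x : ℝ) < v x then winf else ceilReal (v x)

lemma sat_regionUpper (α : X → ℕ) (v : Val X) (x : X) : (regionUpper α v x).sat (v x) := by
  unfold regionUpper; split_ifs
  · trivial
  · exact sat_ceilReal _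

lemma isLeastBound_regionUpper (hw : w ∈ region α v) (x : X) :
    IsLeastBound (region α v) none (some x) (regionUpper α w x) := by
  unfold regionUpper
  split_ifs with hx
  · exact ⟨fun _ _ => trivial, fun u hu => Weight.winf_le (hu.val_eq_none_of_mem_region hw hx)⟩
  · have hvx : v x ≤ α x := not_lt.1 fun h => hx ((hw.2.lt_iff x).1 h)
    exact ⟨hw.2.ceilReal_eq hvx ▸ bounds_region_ceilReal hvx,
      fun u hu => ceilReal_le_iff.2 (by simpa using hu w hw)⟩

lemma isLeastEdgeVal_of_regionUpper {Z : Set (Val X)} {x : X} {m : Weight} (hv : Nonneg v)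
    (hvZ : v ∈ Z) (hm : regionUpper α v x = m) (hmin : ∀ w ∈ Z, m.le (regionUpper α w x)) :
    IsLeastEdgeVal α Z none (some x) m := by
  have hedge : ∀ {v₀ w : Val X} {GR : DGraph X}, IsCanonGraph GR (region α v₀) →
      w ∈ region α v₀ → GR none (some x) = regionUpper α w x := fun hGR hw =>
    (hGR.isLeastBound _ _).unique (isLeastBound_regionUpper hw x)
  obtain ⟨GR, hGR⟩ := exists_isCanonGraph_region α hv
  refine ⟨⟨_, GR, ⟨v, hv, rfl⟩, ⟨v, mem_region_self hv, hvZ⟩, hGR,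
    hm ▸ hedge hGR (mem_region_self hv)⟩, ?_⟩
  rintro R GR ⟨v₀, -, rfl⟩ ⟨w, hwR, hwZ⟩ hGR
  exact hedge hGR hwR ▸ hmin w hwZ

end Region

theorem stmt6_general {X : Type*} (α : X → ℕ) (Z : Set (Val X))
    (hne : Z.Nonempty) (G : DGraph X) (hG : IsCanonGraph G Z)
    (x : X) :
    IsLeastEdgeVal α Z none (some x)
      (if (G (some x) none).lt (wle (-(α x : ℤ))) then winf
       else (G (some x) none).neg.ceil) := by
  have hZnn : ∀ v ∈ Z, Nonneg v := fun v hv => (hG.1 ▸ hv : v ∈ sem G).1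
  have hZx : ∀ v ∈ Z, (G (some x) none).sat (-v x) := fun v hv => by
    simpa using (hG.isLeastBound (some x) none).1 v hv
  split_ifs with hhigh
  · have hZα : ∀ v ∈ Z, (α x : ℝ) < v x := fun v hv => by
      have := Weight.sat_of_le (Weight.lt_wle_iff_le_wlt.1 hhigh) (hZx v hv)
      rw [Weight.sat_wlt] at this
      push_cast at this
      linarith
    obtain ⟨v, hvZ⟩ := hne
    refine isLeastEdgeVal_of_regionUpper (hZnn v hvZ) hvZ (if_pos (hZα v hvZ)) fun w hw => ?_
    rw [regionUpper, if_pos (hZα w hw)]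
    exact Weight.le_refl _
  · obtain ⟨v, hvZ, hv⟩ := (hG.isLeastBound (some x) none).exists_ceilReal_eq (c := 0)
      fun v hv => by simpa using hZnn v hv x
    simp only [extV_none, extV_some, zero_sub] at hv
    have hvα : ¬ (α x : ℝ) < v x := fun hvα => hhigh (by
      rw [← hv, Weight.lt_wle_iff_le_wlt, ceilReal_le_iff, Weight.sat_wlt]
      push_cast
      linarith)
    refine isLeastEdgeVal_of_regionUpper (hZnn v hvZ) hvZ
      (by rw [regionUpper, if_neg hvα, ← hv, neg_ceil_ceilReal_neg]) fun w hw => ?_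
    exact Weight.neg_ceil_le_of_sat (hv ▸ val_ceilReal_ne_none _) (hZx w hw)
      (sat_regionUpper α w x)

/-- Among the regions intersecting a non-empty zone `Z`, the least
value of `R_{0x}` is `(<,∞)` if `Z_{x0} < (≤,−α_x)`, and `⌈−Z_{x0}⌉` otherwise. -/
theorem stmt6 {X : Type*} [Fintype X] (α : X → ℕ) (Z : Set (Val X))
    (hZ : IsZone Z) (hne : Z.Nonempty) (G : DGraph X) (hG : IsCanonGraph G Z)
    (x : X) :
    IsLeastEdgeVal α Z none (some x)
      (if (G (some x) none).lt (wle (-(α x : ℤ))) then winf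
       else (G (some x) none).neg.ceil) :=
  stmt6_general α Z hne G hG x

end TAform

end
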